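/- Fix q ∈ (-1,1) and x with |x| < 2/√(1-q). For any 0 ≤ t₁ < t₂ and y₁, y₂ ∈ ℝ, with δ = t₂ - t₁, the rescaled q-Ornstein–Uhlenbeck transition density satisfies lim_{ε↓0} ε · p_{εt₁, εt₂}(x + y₁ε, x + y₂ε) = δ √(1-q) √(4-(1-q)x²) / (π [(1-q)(y₂-y₁)² + δ²(4-(1-q)x²)]). Equivalently, this limit equals the Cauchy transition density f⁽¹⁾_{t₁,t₂}(y₁/c, y₂/c)/c with c = √(4/(1-q) - x²). -/

import Mathlib

/-- φ_{q,k}(δ,x,y) from the q-Ornstein–Uhlenbeck transition density. -/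
noncomputable def phiQ (q : ℝ) (k : ℕ) (δ x y : ℝ) : ℝ :=
  (1 - Real.exp (-2*δ) * q^(2*k))^2
    - (1-q) * Real.exp (-δ) * q^k * (1 + Real.exp (-2*δ) * q^(2*k)) * x * y
    + (1-q) * Real.exp (-2*δ) * q^(2*k) * (x^2 + y^2)

/-- The q-normal marginal density p(y). -/
noncomputable def pMarg (q y : ℝ) : ℝ :=
  Real.sqrt (1-q) * (∏' k : ℕ, (1 - q^(k+1))) / (2*Real.pi)
    * Real.sqrt (4 - (1-q)*y^2)
    * ∏' k : ℕ, ((1 + q^(k+1))^2 - (1-q)*y^2*q^(k+1))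

/-- Transition density p_{s,t}(x,y) of the q-Ornstein–Uhlenbeck process. -/
noncomputable def pOU (q s t x y : ℝ) : ℝ :=
  (∏' k : ℕ, (1 - Real.exp (-2*(t-s)) * q^k)) * (∏' k : ℕ, 1 / phiQ q k (t-s) x y)
    * pMarg q y

/-- Cauchy process transition density f⁽¹⁾_{t₁,t₂}(u,v). -/
noncomputable def fCauchy (t₁ t₂ u v : ℝ) : ℝ :=
  (1/Real.pi) * ((t₂ - t₁) / ((v - u)^2 + (t₂ - t₁)^2))

/-!
Only the `k = 0` factors of the two products in `p_{s,t}` degenerate as `t - s → 0`. With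
`δ = ε τ`, `a = e^{-ετ}` and `(1 - a) / ε → τ`, one has
`ε (1 - a²) / φ_{q,0}(ετ, x + ε y₁, x + ε y₂) → 2τ / ((1-q)(y₂-y₁)² + τ²(4 - (1-q)x²))`.
All other factors are within `O(|q|^k)` of `1`, uniformly in `δ ≥ 0` and `x, y` in the support,
so by dominated convergence their products are continuous up to `δ = 0`, where
`φ_{q,k}(0,x,x) = (1-q^k)² ((1+q^k)² - (1-q)x²q^k)` makes them cancel against `p(x)`.
-/

open Real Filter Topology

section RealProducts

variable {ι α : Type*} {f : ι → ℝ}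

lemma multipliable_of_summable_sub_one (h : Summable fun i => f i - 1) : Multipliable f := by
  simpa using Real.multipliable_one_add_of_summable h

lemma tprod_pos_of_summable_sub_one (hpos : ∀ i, 0 < f i) (h : Summable fun i => f i - 1) :
    0 < ∏' i, f i := by
  have hlog : Summable fun i => log (f i) := by
    simpa using Real.summable_log_one_add_of_summable h
  rw [← Real.rexp_tsum_eq_tprod hpos hlog]
  exact exp_pos _

lemma tendsto_tprod_of_dominated {l : Filter α} {f : α → ι → ℝ} {g : ι → ℝ} {b : ι → ℝ}
    (hb : Summable b) (hlim : ∀ i, Tendsto (f · i) l (𝓝 (g i)))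
    (hbound : ∀ᶠ a in l, ∀ i, |f a i - 1| ≤ b i) :
    Tendsto (fun a => ∏' i, f a i) l (𝓝 (∏' i, g i)) := by
  simpa using tendsto_tprod_one_add_of_dominated_convergence (f := fun a i => f a i - 1)
    (g := fun i => g i - 1) hb (fun i => (hlim i).sub_const 1) hbound

end RealProducts

lemma summable_mul_abs_pow_succ {q : ℝ} (hq : |q| < 1) (C : ℝ) :
    Summable fun k : ℕ => C * |q| ^ (k + 1) :=
  (summable_nat_add_iff 1).mpr ((summable_geometric_of_lt_one (abs_nonneg q) hq).mul_left C)

lemma abs_pow_succ_lt_one {q : ℝ} (hq : |q| < 1) (k : ℕ) : |q ^ (k + 1)| < 1 := by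
  rw [abs_pow]; exact pow_lt_one₀ (abs_nonneg q) hq k.succ_ne_zero

lemma exp_neg_two_mul_eq_sq (δ : ℝ) : exp (-2 * δ) = exp (-δ) ^ 2 := by
  rw [← exp_nat_mul]; ring_nf

lemma abs_exp_neg_mul_le {δ : ℝ} (hδ : 0 ≤ δ) (c : ℝ) : |exp (-δ) * c| ≤ |c| := by
  rw [abs_mul, abs_of_pos (exp_pos _)]
  exact mul_le_of_le_one_left (abs_nonneg c) (exp_le_one_iff.mpr (by linarith))

lemma abs_exp_neg_mul_pow_lt_one {q δ : ℝ} (hq : |q| ≤ 1) (hδ : 0 < δ) (k : ℕ) :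
    |exp (-δ) * q ^ k| < 1 := by
  rw [abs_mul, abs_of_pos (exp_pos _), abs_pow]
  exact mul_lt_one_of_nonneg_of_lt_one_left (exp_pos _).le (exp_lt_one_iff.mpr (by linarith))
    (pow_le_one₀ (abs_nonneg q) hq)

lemma sq_one_sub_abs_le {a c : ℝ} (hc : |c| ≤ 1) : (1 - |a|) ^ 2 ≤ 1 - 2 * a * c + a ^ 2 := by
  have : a * c ≤ |a| := by
    calc a * c ≤ |a * c| := le_abs_self _
      _ = |a| * |c| := abs_mul a c
      _ ≤ |a| := mul_le_of_le_one_right (abs_nonneg a) hc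
  nlinarith [sq_abs a]

lemma abs_mul_add_mul_le_one {X Y s t : ℝ} (hs : s ^ 2 = 1 - X ^ 2) (ht : t ^ 2 = 1 - Y ^ 2) :
    |X * Y + s * t| ≤ 1 := by
  rw [← sq_le_one_iff_abs_le_one]
  nlinarith [sq_nonneg (X * t - s * Y)]

lemma one_add_sq_sub_mul_pos {b c : ℝ} (hb : |b| < 1) (hc0 : 0 ≤ c) (hc4 : c ≤ 4) :
    0 < (1 + b) ^ 2 - c * b := by
  have hc : |c / 2 - 1| ≤ 1 := abs_le.mpr ⟨by linarith, by linarith⟩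
  have := sq_one_sub_abs_le (a := b) hc
  nlinarith

lemma abs_one_add_sq_sub_mul_sub_one_le {b c : ℝ} (hb : |b| ≤ 1) (hc0 : 0 ≤ c) (hc4 : c ≤ 4) :
    |(1 + b) ^ 2 - c * b - 1| ≤ 3 * |b| := by
  rw [show (1 + b) ^ 2 - c * b - 1 = (2 + b - c) * b by ring, abs_mul]
  have := abs_le.mp hb
  gcongr
  exact abs_le.mpr ⟨by linarith, by linarith⟩

def phiNormalized (a X Y : ℝ) : ℝ :=
  (1 - a ^ 2) ^ 2 - 4 * a * (1 + a ^ 2) * X * Y + 4 * a ^ 2 * (X ^ 2 + Y ^ 2)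

/-- With `X = cos θ`, `Y = cos ψ`, `S = sin θ sin ψ` this is
`|1 - a e^{i(θ+ψ)}|² |1 - a e^{i(θ-ψ)}|²`. -/
lemma phiNormalized_eq_mul {a X Y S : ℝ} (hS : S ^ 2 = (1 - X ^ 2) * (1 - Y ^ 2)) :
    phiNormalized a X Y
      = (1 - 2 * a * (X * Y - S) + a ^ 2) * (1 - 2 * a * (X * Y + S) + a ^ 2) := by
  unfold phiNormalized
  linear_combination (4 * a ^ 2) * hS

lemma phiNormalized_pos {a X Y : ℝ} (ha : |a| < 1) (hX : X ^ 2 ≤ 1) (hY : Y ^ 2 ≤ 1) :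
    0 < phiNormalized a X Y := by
  set s := √(1 - X ^ 2)
  set t := √(1 - Y ^ 2)
  have hs : s ^ 2 = 1 - X ^ 2 := sq_sqrt (by linarith)
  have ht : t ^ 2 = 1 - Y ^ 2 := sq_sqrt (by linarith)
  have hpos : 0 < (1 - |a|) ^ 2 := by nlinarith
  rw [phiNormalized_eq_mul (S := s * t) (by rw [mul_pow, hs, ht])]
  have hminus : |X * Y - s * t| ≤ 1 := by
    simpa [neg_mul, sub_eq_add_neg] using abs_mul_add_mul_le_one (t := -t) hs (by rw [neg_sq, ht])
  exact mul_pos (hpos.trans_le (sq_one_sub_abs_le hminus))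
    (hpos.trans_le (sq_one_sub_abs_le (abs_mul_add_mul_le_one hs ht)))

lemma abs_phiNormalized_sub_one_le {a X Y : ℝ} (ha : |a| ≤ 1) (hX : X ^ 2 ≤ 1) (hY : Y ^ 2 ≤ 1) :
    |phiNormalized a X Y - 1| ≤ 19 * |a| := by
  have hXY : |X * Y| ≤ 1 := by
    rw [← sq_le_one_iff_abs_le_one, mul_pow]; exact mul_le_one₀ hX (sq_nonneg Y) hY
  have ha2 : a ^ 2 ≤ |a| := by nlinarith [sq_abs a, abs_nonneg a]
  have hcross : |4 * a * (1 + a ^ 2) * X * Y| ≤ 8 * |a| :=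
    calc |4 * a * (1 + a ^ 2) * X * Y| = 4 * |a| * (1 + a ^ 2) * |X * Y| := by
          rw [mul_assoc, abs_mul, abs_mul, abs_mul, abs_of_pos four_pos,
            abs_of_pos (by positivity : (0 : ℝ) < 1 + a ^ 2)]
      _ ≤ 4 * |a| * 2 * 1 := by gcongr; linarith
      _ = 8 * |a| := by ring
  have hquad : 4 * a ^ 2 * (X ^ 2 + Y ^ 2) ≤ 8 * |a| := by nlinarith
  have hrest : |a ^ 4 - 2 * a ^ 2| ≤ 3 * |a| := by
    rw [abs_le]; constructor <;> nlinarith [sq_nonneg a]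
  rw [show phiNormalized a X Y - 1
      = (a ^ 4 - 2 * a ^ 2) - 4 * a * (1 + a ^ 2) * X * Y + 4 * a ^ 2 * (X ^ 2 + Y ^ 2) by
    unfold phiNormalized; ring]
  rw [abs_le] at hcross hrest ⊢
  have : 0 ≤ 4 * a ^ 2 * (X ^ 2 + Y ^ 2) := by positivity
  constructor <;> linarith [hcross.1, hcross.2, hrest.1, hrest.2]

lemma sq_sqrt_one_sub_mul_div_two_le_one {q x : ℝ} (hq : q ≤ 1) (hx : (1 - q) * x ^ 2 ≤ 4) :
    (√(1 - q) * x / 2) ^ 2 ≤ 1 := by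
  rw [div_pow, mul_pow, sq_sqrt (by linarith)]
  linarith

lemma phiQ_eq_phiNormalized {q : ℝ} (hq : q ≤ 1) (k : ℕ) (δ x y : ℝ) :
    phiQ q k δ x y
      = phiNormalized (exp (-δ) * q ^ k) (√(1 - q) * x / 2) (√(1 - q) * y / 2) := by
  unfold phiQ phiNormalized
  set r := √(1 - q)
  have hr : r ^ 2 = 1 - q := sq_sqrt (by linarith)
  rw [exp_neg_two_mul_eq_sq, pow_mul', ← hr]
  ring

lemma phiQ_pos {q δ x y : ℝ} {k : ℕ} (hq : q ≤ 1) (ha : |exp (-δ) * q ^ k| < 1)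
    (hx : (1 - q) * x ^ 2 ≤ 4) (hy : (1 - q) * y ^ 2 ≤ 4) : 0 < phiQ q k δ x y := by
  rw [phiQ_eq_phiNormalized hq]
  exact phiNormalized_pos ha (sq_sqrt_one_sub_mul_div_two_le_one hq hx)
    (sq_sqrt_one_sub_mul_div_two_le_one hq hy)

lemma abs_phiQ_sub_one_le {q δ x y : ℝ} (k : ℕ) (hq : |q| ≤ 1) (hδ : 0 ≤ δ)
    (hx : (1 - q) * x ^ 2 ≤ 4) (hy : (1 - q) * y ^ 2 ≤ 4) :
    |phiQ q k δ x y - 1| ≤ 19 * |q| ^ k := by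
  have hq1 : q ≤ 1 := (abs_le.mp hq).2
  have ha : |exp (-δ) * q ^ k| ≤ |q| ^ k := abs_pow q k ▸ abs_exp_neg_mul_le hδ _
  rw [phiQ_eq_phiNormalized hq1]
  refine (abs_phiNormalized_sub_one_le (ha.trans (pow_le_one₀ (abs_nonneg q) hq))
    (sq_sqrt_one_sub_mul_div_two_le_one hq1 hx)
    (sq_sqrt_one_sub_mul_div_two_le_one hq1 hy)).trans ?_
  gcongr

lemma phiQ_zero_self (q : ℝ) (k : ℕ) (x : ℝ) :
    phiQ q k 0 x x = (1 - q ^ k) ^ 2 * ((1 + q ^ k) ^ 2 - (1 - q) * x ^ 2 * q ^ k) := by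
  simp only [phiQ, mul_zero, neg_zero, exp_zero, one_mul, pow_mul]
  ring

lemma phiQ_zero_eq_div_sq {q τ x y₁ y₂ ε : ℝ} (hε : ε ≠ 0) :
    phiQ q 0 (τ * ε) (x + y₁ * ε) (x + y₂ * ε) / ε ^ 2
      = ((1 - exp (-(τ * ε))) / ε * (1 + exp (-(τ * ε)))) ^ 2
        + (1 - q) * exp (-(τ * ε)) * (exp (-(τ * ε)) * (y₁ - y₂) ^ 2
          - ((1 - exp (-(τ * ε))) / ε) ^ 2 * ((x + y₁ * ε) * (x + y₂ * ε))) := by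
  unfold phiQ
  rw [exp_neg_two_mul_eq_sq]
  field_simp
  ring

section Products

variable {α : Type*} {q : ℝ}

lemma summable_phiQ_sub_one {δ x y : ℝ} (hq : |q| < 1) (hδ : 0 ≤ δ)
    (hx : (1 - q) * x ^ 2 ≤ 4) (hy : (1 - q) * y ^ 2 ≤ 4) :
    Summable fun k => phiQ q k δ x y - 1 :=
  ((summable_geometric_of_lt_one (abs_nonneg q) hq).mul_left 19).of_norm_bounded
    fun k => abs_phiQ_sub_one_le k hq.le hδ hx hy

lemma tprod_phiQ_succ_pos {δ x y : ℝ} (hq : |q| < 1) (hδ : 0 ≤ δ)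
    (hx : (1 - q) * x ^ 2 ≤ 4) (hy : (1 - q) * y ^ 2 ≤ 4) :
    0 < ∏' k : ℕ, phiQ q (k + 1) δ x y :=
  tprod_pos_of_summable_sub_one
    (fun k => phiQ_pos (abs_lt.mp hq).2.le
      ((abs_exp_neg_mul_le hδ _).trans_lt (abs_pow_succ_lt_one hq k)) hx hy)
    ((summable_phiQ_sub_one hq hδ hx hy).comp_injective (add_left_injective 1))

lemma abs_one_sub_exp_mul_sub_one_le {δ : ℝ} (hδ : 0 ≤ δ) (c : ℝ) :
    |1 - exp (-2 * δ) * c - 1| ≤ |c| := by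
  rw [sub_sub_cancel_left, abs_neg, neg_mul]
  exact abs_exp_neg_mul_le (by linarith) c

lemma summable_one_sub_exp_mul_pow_succ_sub_one {δ : ℝ} (hq : |q| < 1) (hδ : 0 ≤ δ) :
    Summable fun k : ℕ => 1 - exp (-2 * δ) * q ^ (k + 1) - 1 :=
  (summable_mul_abs_pow_succ hq 1).of_norm_bounded
    fun k => by simpa [abs_pow] using abs_one_sub_exp_mul_sub_one_le hδ (q ^ (k + 1))

lemma abs_pMarg_factor_sub_one_le {y : ℝ} (hq : |q| < 1) (hy : (1 - q) * y ^ 2 ≤ 4) (k : ℕ) :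
    |(1 + q ^ (k + 1)) ^ 2 - (1 - q) * y ^ 2 * q ^ (k + 1) - 1| ≤ 3 * |q| ^ (k + 1) := by
  have hq1 : 0 ≤ 1 - q := by linarith [(abs_lt.mp hq).2]
  simpa [abs_pow] using abs_one_add_sq_sub_mul_sub_one_le (b := q ^ (k + 1))
    (abs_pow_succ_lt_one hq k).le (mul_nonneg hq1 (sq_nonneg y)) hy

lemma pOU_eq {s t x y : ℝ} (hq : |q| < 1) (hst : s < t)
    (hx : (1 - q) * x ^ 2 ≤ 4) (hy : (1 - q) * y ^ 2 ≤ 4) :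
    pOU q s t x y = (1 - exp (-2 * (t - s))) / phiQ q 0 (t - s) x y
      * ((∏' k : ℕ, (1 - exp (-2 * (t - s)) * q ^ (k + 1)))
        / ∏' k : ℕ, phiQ q (k + 1) (t - s) x y) * pMarg q y := by
  have hδ : 0 < t - s := sub_pos.mpr hst
  have hq1 : q ≤ 1 := (abs_lt.mp hq).2.le
  have hφ := summable_phiQ_sub_one hq hδ.le hx hy
  have hφpos : ∀ k, 0 < phiQ q k (t - s) x y := fun k =>
    phiQ_pos hq1 (abs_exp_neg_mul_pow_lt_one hq.le hδ k) hx hy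
  have hprod : ∏' k : ℕ, 1 / phiQ q k (t - s) x y = (∏' k : ℕ, phiQ q k (t - s) x y)⁻¹ := by
    simp_rw [one_div]
    exact (multipliable_of_summable_sub_one hφ).tprod_inv₀
      (tprod_pos_of_summable_sub_one hφpos hφ).ne'
  have hA := tprod_eq_zero_mul' (f := fun k => 1 - exp (-2 * (t - s)) * q ^ k)
    (multipliable_of_summable_sub_one (summable_one_sub_exp_mul_pow_succ_sub_one hq hδ.le))
  have hB := tprod_eq_zero_mul' (f := fun k => phiQ q k (t - s) x y)
    (multipliable_of_summable_sub_one (hφ.comp_injective (add_left_injective 1)))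
  rw [pOU, hprod, hA, hB]
  simp only [pow_zero, mul_one, mul_inv]
  ring

lemma tprod_div_tprod_phiQ_zero_self_mul_pMarg {x : ℝ} (hq : |q| < 1)
    (hx : (1 - q) * x ^ 2 ≤ 4) :
    (∏' k : ℕ, (1 - q ^ (k + 1))) / (∏' k : ℕ, phiQ q (k + 1) 0 x x) * pMarg q x
      = √(1 - q) / (2 * π) * √(4 - (1 - q) * x ^ 2) := by
  have hq1 : 0 ≤ 1 - q := by linarith [(abs_lt.mp hq).2]
  have hP : Summable fun k : ℕ => 1 - q ^ (k + 1) - 1 := by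
    simpa using summable_one_sub_exp_mul_pow_succ_sub_one hq le_rfl
  have hPpos : ∀ k : ℕ, 0 < 1 - q ^ (k + 1) := fun k => by
    linarith [le_abs_self (q ^ (k + 1)), abs_pow_succ_lt_one hq k]
  have hG : Summable fun k : ℕ => (1 + q ^ (k + 1)) ^ 2 - (1 - q) * x ^ 2 * q ^ (k + 1) - 1 :=
    (summable_mul_abs_pow_succ hq 3).of_norm_bounded (abs_pMarg_factor_sub_one_le hq hx)
  have hGpos : ∀ k : ℕ, 0 < (1 + q ^ (k + 1)) ^ 2 - (1 - q) * x ^ 2 * q ^ (k + 1) :=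
    fun k => one_add_sq_sub_mul_pos (abs_pow_succ_lt_one hq k) (by positivity) hx
  have hPm := multipliable_of_summable_sub_one hP
  have hsplit : ∏' k : ℕ, phiQ q (k + 1) 0 x x
      = (∏' k : ℕ, (1 - q ^ (k + 1))) * (∏' k : ℕ, (1 - q ^ (k + 1)))
        * ∏' k : ℕ, ((1 + q ^ (k + 1)) ^ 2 - (1 - q) * x ^ 2 * q ^ (k + 1)) := by
    rw [← hPm.tprod_mul hPm, ← (hPm.mul hPm).tprod_mul (multipliable_of_summable_sub_one hG)]
    exact tprod_congr fun k => (phiQ_zero_self q (k + 1) x).trans (by ring)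
  have hP0 := (tprod_pos_of_summable_sub_one hPpos hP).ne'
  have hG0 := (tprod_pos_of_summable_sub_one hGpos hG).ne'
  rw [hsplit, pMarg]
  generalize ∏' k : ℕ, (1 - q ^ (k + 1)) = P at hP0 ⊢
  generalize ∏' k : ℕ, ((1 + q ^ (k + 1)) ^ 2 - (1 - q) * x ^ 2 * q ^ (k + 1)) = G at hG0 ⊢
  field_simp

lemma continuousAt_pMarg {y : ℝ} (hq : |q| < 1) (hy : (1 - q) * y ^ 2 < 4) :
    ContinuousAt (pMarg q) y := by
  have hnear : ∀ᶠ z in 𝓝 y, (1 - q) * z ^ 2 ≤ 4 :=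
    ((continuous_const.mul (continuous_pow 2)).tendsto y).eventually_le_const hy
  have hprod : ContinuousAt
      (fun z => ∏' k : ℕ, ((1 + q ^ (k + 1)) ^ 2 - (1 - q) * z ^ 2 * q ^ (k + 1))) y :=
    tendsto_tprod_of_dominated (summable_mul_abs_pow_succ hq 3)
      (fun k => (Continuous.tendsto (by fun_prop) y))
      (hnear.mono fun z hz k => abs_pMarg_factor_sub_one_le hq hz k)
  unfold pMarg
  exact (continuousAt_const.mul (by fun_prop)).mul hprod

lemma tendsto_tprod_one_sub_exp_mul_pow_succ {l : Filter α} {δ : α → ℝ} {δ₀ : ℝ}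
    (hq : |q| < 1) (hδ : Tendsto δ l (𝓝 δ₀)) (hδ0 : ∀ᶠ a in l, 0 ≤ δ a) :
    Tendsto (fun a => ∏' k : ℕ, (1 - exp (-2 * δ a) * q ^ (k + 1))) l
      (𝓝 (∏' k : ℕ, (1 - exp (-2 * δ₀) * q ^ (k + 1)))) :=
  tendsto_tprod_of_dominated (summable_mul_abs_pow_succ hq 1)
    (fun k => ((Continuous.tendsto (f := fun d => 1 - exp (-2 * d) * q ^ (k + 1))
      (by fun_prop) δ₀).comp hδ))
    (hδ0.mono fun a ha k => by
      simpa [abs_pow] using abs_one_sub_exp_mul_sub_one_le ha (q ^ (k + 1)))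

lemma tendsto_tprod_phiQ_succ {l : Filter α} {δ u v : α → ℝ} {δ₀ x₀ y₀ : ℝ} (hq : |q| < 1)
    (hδ : Tendsto δ l (𝓝 δ₀)) (hu : Tendsto u l (𝓝 x₀)) (hv : Tendsto v l (𝓝 y₀))
    (hbound : ∀ᶠ a in l, 0 ≤ δ a ∧ (1 - q) * u a ^ 2 ≤ 4 ∧ (1 - q) * v a ^ 2 ≤ 4) :
    Tendsto (fun a => ∏' k : ℕ, phiQ q (k + 1) (δ a) (u a) (v a)) l
      (𝓝 (∏' k : ℕ, phiQ q (k + 1) δ₀ x₀ y₀)) := by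
  refine tendsto_tprod_of_dominated (summable_mul_abs_pow_succ hq 19) (fun k => ?_)
    (hbound.mono fun a ⟨hδa, hua, hva⟩ k => abs_phiQ_sub_one_le (k + 1) hq.le hδa hua hva)
  have hcont : Continuous fun p : ℝ × ℝ × ℝ => phiQ q (k + 1) p.1 p.2.1 p.2.2 := by
    unfold phiQ; fun_prop
  have hcomp := (hcont.tendsto (δ₀, x₀, y₀)).comp (hδ.prodMk_nhds (hu.prodMk_nhds hv))
  exact hcomp

lemma tendsto_tprod_div_tprod_phiQ_succ {l : Filter α} {δ u v : α → ℝ} {x : ℝ} (hq : |q| < 1)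
    (hx : (1 - q) * x ^ 2 ≤ 4) (hδ : Tendsto δ l (𝓝 0)) (hu : Tendsto u l (𝓝 x))
    (hv : Tendsto v l (𝓝 x))
    (hbound : ∀ᶠ a in l, 0 ≤ δ a ∧ (1 - q) * u a ^ 2 ≤ 4 ∧ (1 - q) * v a ^ 2 ≤ 4) :
    Tendsto (fun a => (∏' k : ℕ, (1 - exp (-2 * δ a) * q ^ (k + 1)))
        / ∏' k : ℕ, phiQ q (k + 1) (δ a) (u a) (v a)) l
      (𝓝 ((∏' k : ℕ, (1 - q ^ (k + 1))) / ∏' k : ℕ, phiQ q (k + 1) 0 x x)) := by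
  have h := (tendsto_tprod_one_sub_exp_mul_pow_succ hq hδ (hbound.mono fun _ h => h.1)).div
    (tendsto_tprod_phiQ_succ hq hδ hu hv hbound) (tprod_phiQ_succ_pos hq le_rfl hx hx).ne'
  simp only [mul_zero, exp_zero, one_mul] at h
  exact h

end Products

lemma tendsto_add_mul_nhdsWithin_zero (s : Set ℝ) (x y : ℝ) :
    Tendsto (fun ε => x + y * ε) (𝓝[s] 0) (𝓝 x) := by
  simpa using ((Continuous.tendsto (by fun_prop) 0).mono_left nhdsWithin_le_nhds :
    Tendsto (fun ε => x + y * ε) (𝓝[s] 0) (𝓝 (x + y * 0)))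

lemma eventually_one_sub_mul_sq_le_four {q x : ℝ} (hx : (1 - q) * x ^ 2 < 4) (y : ℝ) :
    ∀ᶠ ε in 𝓝[>] 0, (1 - q) * (x + y * ε) ^ 2 ≤ 4 :=
  (((tendsto_add_mul_nhdsWithin_zero _ x y).pow 2).const_mul (1 - q)).eventually_le_const hx

lemma tendsto_one_sub_exp_neg_mul_div (τ : ℝ) :
    Tendsto (fun ε => (1 - exp (-(τ * ε))) / ε) (𝓝[≠] 0) (𝓝 τ) := by
  have hderiv : HasDerivAt (fun ε => 1 - exp (-(τ * ε))) τ 0 := by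
    simpa using ((hasDerivAt_id (0 : ℝ)).const_mul τ).neg.exp.const_sub 1
  refine (hasDerivAt_iff_tendsto_slope.mp hderiv).congr' ?_
  filter_upwards [self_mem_nhdsWithin] with ε hε
  simp [slope_def_field]

lemma tendsto_mul_one_sub_exp_div_phiQ_zero {q τ x y₁ y₂ : ℝ}
    (hD : (1 - q) * (y₂ - y₁) ^ 2 + τ ^ 2 * (4 - (1 - q) * x ^ 2) ≠ 0) :
    Tendsto (fun ε => ε * (1 - exp (-2 * (τ * ε))) / phiQ q 0 (τ * ε) (x + y₁ * ε) (x + y₂ * ε))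
      (𝓝[≠] 0) (𝓝 (2 * τ / ((1 - q) * (y₂ - y₁) ^ 2 + τ ^ 2 * (4 - (1 - q) * x ^ 2)))) := by
  have hh := tendsto_one_sub_exp_neg_mul_div τ
  have ha : Tendsto (fun ε => exp (-(τ * ε))) (𝓝[≠] 0) (𝓝 1) := by
    simpa using ((Continuous.tendsto (by fun_prop) 0).mono_left nhdsWithin_le_nhds :
      Tendsto (fun ε => exp (-(τ * ε))) (𝓝[≠] 0) (𝓝 (exp (-(τ * 0)))))
  have huv := (tendsto_add_mul_nhdsWithin_zero {0}ᶜ x y₁).mul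
    (tendsto_add_mul_nhdsWithin_zero {0}ᶜ x y₂)
  have hnum := hh.mul (tendsto_const_nhds (x := (1 : ℝ)).add ha)
  have hden := (hnum.pow 2).add ((tendsto_const_nhds (x := 1 - q)).mul ha |>.mul
    ((ha.mul (tendsto_const_nhds (x := (y₁ - y₂) ^ 2))).sub ((hh.pow 2).mul huv)))
  have hlim := hnum.div hden (by convert hD using 1; ring)
  convert hlim.congr' ?_ using 2
  · ring
  filter_upwards [self_mem_nhdsWithin] with ε hε
  rw [Pi.div_apply, ← phiQ_zero_eq_div_sq hε, exp_neg_two_mul_eq_sq]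
  field_simp
  ring

lemma fCauchy_div_eq {c : ℝ} (hc : c ≠ 0) (t₁ t₂ y₁ y₂ : ℝ) :
    fCauchy t₁ t₂ (y₁ / c) (y₂ / c) / c
      = (t₂ - t₁) * c / (π * ((y₂ - y₁) ^ 2 + (t₂ - t₁) ^ 2 * c ^ 2)) := by
  unfold fCauchy
  rw [← sub_div, div_pow]
  field_simp

lemma qOU_limit_eq_fCauchy {q x : ℝ} (hq : q < 1) (hx : (1 - q) * x ^ 2 < 4) (t₁ t₂ y₁ y₂ : ℝ) :
    (t₂ - t₁) * √(1 - q) * √(4 - (1 - q) * x ^ 2)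
        / (π * ((1 - q) * (y₂ - y₁) ^ 2 + (t₂ - t₁) ^ 2 * (4 - (1 - q) * x ^ 2)))
      = fCauchy t₁ t₂ (y₁ / √(4 / (1 - q) - x ^ 2)) (y₂ / √(4 / (1 - q) - x ^ 2))
          / √(4 / (1 - q) - x ^ 2) := by
  have hq1 : 0 < 1 - q := by linarith
  have hc2 : 0 < 4 / (1 - q) - x ^ 2 := by
    rw [sub_pos, lt_div_iff₀ hq1]; linarith
  have hc : (1 - q) * √(4 / (1 - q) - x ^ 2) ^ 2 = 4 - (1 - q) * x ^ 2 := by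
    rw [sq_sqrt hc2.le]; field_simp
  have hsqrt : √(1 - q) * √(4 - (1 - q) * x ^ 2) = (1 - q) * √(4 / (1 - q) - x ^ 2) := by
    rw [← hc, sqrt_mul hq1.le, sqrt_sq (sqrt_nonneg _), ← mul_assoc, mul_self_sqrt hq1.le]
  rw [fCauchy_div_eq (sqrt_pos.mpr hc2).ne', mul_assoc (t₂ - t₁), hsqrt, ← hc]
  generalize √(4 / (1 - q) - x ^ 2) = c
  field_simp

lemma one_sub_mul_sq_lt_four {q x : ℝ} (hq : q < 1) (hx : |x| < 2 / √(1 - q)) :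
    (1 - q) * x ^ 2 < 4 := by
  have hs : 0 < √(1 - q) := sqrt_pos.mpr (by linarith)
  have h := (lt_div_iff₀ hs).mp hx
  calc (1 - q) * x ^ 2 = (|x| * √(1 - q)) ^ 2 := by
        rw [mul_pow, sq_abs, sq_sqrt (by linarith)]; ring
    _ < 4 := by nlinarith [mul_nonneg (abs_nonneg x) hs.le]

theorem stmt6_general (q : ℝ) (hq : q ∈ Set.Ioo (-1:ℝ) 1) (x : ℝ)
    (hx : |x| < 2 / Real.sqrt (1-q)) (t₁ t₂ : ℝ) (ht : t₁ < t₂)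
    (y₁ y₂ : ℝ) :
    Filter.Tendsto
      (fun ε : ℝ => ε * pOU q (ε*t₁) (ε*t₂) (x + y₁*ε) (x + y₂*ε))
      (nhdsWithin 0 (Set.Ioi 0))
      (nhds ((t₂-t₁) * Real.sqrt (1-q) * Real.sqrt (4 - (1-q)*x^2)
        / (Real.pi * ((1-q)*(y₂-y₁)^2 + (t₂-t₁)^2 * (4 - (1-q)*x^2))))) ∧
    (t₂-t₁) * Real.sqrt (1-q) * Real.sqrt (4 - (1-q)*x^2)
        / (Real.pi * ((1-q)*(y₂-y₁)^2 + (t₂-t₁)^2 * (4 - (1-q)*x^2)))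
      = fCauchy t₁ t₂ (y₁ / Real.sqrt (4/(1-q) - x^2)) (y₂ / Real.sqrt (4/(1-q) - x^2))
          / Real.sqrt (4/(1-q) - x^2) := by
  have hq' : |q| < 1 := abs_lt.mpr hq
  have hx4 : (1 - q) * x ^ 2 < 4 := one_sub_mul_sq_lt_four hq.2 hx
  refine ⟨?_, qOU_limit_eq_fCauchy hq.2 hx4 t₁ t₂ y₁ y₂⟩
  set τ := t₂ - t₁
  have hτ : 0 < τ := sub_pos.mpr ht
  have hD : (1 - q) * (y₂ - y₁) ^ 2 + τ ^ 2 * (4 - (1 - q) * x ^ 2) ≠ 0 :=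
    (add_pos_of_nonneg_of_pos (mul_nonneg (by linarith [hq.2]) (sq_nonneg _))
      (mul_pos (pow_pos hτ 2) (by linarith))).ne'
  have hδ : Tendsto (fun ε => τ * ε) (𝓝[>] 0) (𝓝 0) := by
    simpa using (tendsto_nhdsWithin_of_tendsto_nhds (tendsto_id (x := 𝓝 (0 : ℝ)))).const_mul τ
  have hbound : ∀ᶠ ε in 𝓝[>] 0, 0 ≤ τ * ε ∧ (1 - q) * (x + y₁ * ε) ^ 2 ≤ 4
      ∧ (1 - q) * (x + y₂ * ε) ^ 2 ≤ 4 := by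
    filter_upwards [self_mem_nhdsWithin, eventually_one_sub_mul_sq_le_four hx4 y₁,
      eventually_one_sub_mul_sq_le_four hx4 y₂] with ε hε h₁ h₂
    exact ⟨(mul_pos hτ hε).le, h₁, h₂⟩
  have hlim := (((tendsto_mul_one_sub_exp_div_phiQ_zero hD).mono_left (nhdsGT_le_nhdsNE 0)).mul
    (tendsto_tprod_div_tprod_phiQ_succ hq' hx4.le hδ (tendsto_add_mul_nhdsWithin_zero _ x y₁)
      (tendsto_add_mul_nhdsWithin_zero _ x y₂) hbound)).mul
    ((continuousAt_pMarg hq' hx4).tendsto.comp (tendsto_add_mul_nhdsWithin_zero _ x y₂))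
  rw [mul_assoc, tprod_div_tprod_phiQ_zero_self_mul_pMarg hq' hx4.le] at hlim
  convert hlim.congr' ?_ using 2
  · field_simp
  filter_upwards [self_mem_nhdsWithin, hbound] with ε (hε : 0 < ε) ⟨_, h₁, h₂⟩
  rw [Function.comp_apply, pOU_eq hq' (by nlinarith) h₁ h₂, show ε * t₂ - ε * t₁ = τ * ε by ring]
  ring

theorem stmt6 (q : ℝ) (hq : q ∈ Set.Ioo (-1:ℝ) 1) (x : ℝ)
    (hx : |x| < 2 / Real.sqrt (1-q)) (t₁ t₂ : ℝ) (ht₁ : 0 ≤ t₁) (ht : t₁ < t₂)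
    (y₁ y₂ : ℝ) :
    Filter.Tendsto
      (fun ε : ℝ => ε * pOU q (ε*t₁) (ε*t₂) (x + y₁*ε) (x + y₂*ε))
      (nhdsWithin 0 (Set.Ioi 0))
      (nhds ((t₂-t₁) * Real.sqrt (1-q) * Real.sqrt (4 - (1-q)*x^2)
        / (Real.pi * ((1-q)*(y₂-y₁)^2 + (t₂-t₁)^2 * (4 - (1-q)*x^2))))) ∧
    (t₂-t₁) * Real.sqrt (1-q) * Real.sqrt (4 - (1-q)*x^2)
        / (Real.pi * ((1-q)*(y₂-y₁)^2 + (t₂-t₁)^2 * (4 - (1-q)*x^2)))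
      = fCauchy t₁ t₂ (y₁ / Real.sqrt (4/(1-q) - x^2)) (y₂ / Real.sqrt (4/(1-q) - x^2))
          / Real.sqrt (4/(1-q) - x^2) :=
  stmt6_general q hq x hx t₁ t₂ ht y₁ y₂
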